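/- For each fixed y ∈ (−π/2, π/2), lim_{δ→0⁺} (1/δ)·log[ R(iy, S_δ) / R(iy, S) ] = 1/π + ((π + 2y)·tan y)/(2π), and this limit is a finite positive number; moreover the convergence is uniform on compact subsets of (−π/2, π/2). -/

import Mathlib

open Real Filter

/-- Conformal radius of the strip `S_δ = {z : -π/2 < Im z < π/2 + δ}` at the point `iy`. -/
noncomputable def stripRad (δ y : ℝ) : ℝ :=
  4 * ((π + δ) / π) * Real.cos ((π / 2) * (2 * y - δ) / (π + δ))

/-- The limit function. -/
noncomputable def stripLim (y : ℝ) : ℝ :=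
  1 / π + (π + 2 * y) * Real.tan y / (2 * π)

/-!
Write `R(iy, S_δ) = 4 ((π + δ) / π) cos θ(δ, y)` with `θ(δ, y) = (π/2)(2y - δ)/(π + δ)`.
Since `θ(δ, y) ∈ (-π/2, π/2)` for all `δ ≥ 0`, the map `δ ↦ log R(iy, S_δ)` is differentiable
on `[0, ∞)` with a derivative jointly continuous in `(δ, y)`, whose value at `δ = 0` is the
claimed limit.
Difference quotients of such a function converge to the derivative uniformly on compacts: by the
mean value theorem they are controlled by the modulus of continuity of the derivative on
`[0, 1] × K`. For `y < 0` the limit is positive because `x < tan x` at `x = π/2 + y`.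
-/

open Set Topology

theorem tendstoUniformlyOn_slope_of_continuousOn {α E : Type*} [PseudoMetricSpace α]
    [NormedAddCommGroup E] [NormedSpace ℝ E] {f f' : ℝ → α → E} {K : Set α} {a : ℝ}
    (hK : IsCompact K) (ha : 0 < a)
    (hf : ∀ y ∈ K, ∀ t ∈ Icc 0 a, HasDerivWithinAt (f · y) (f' t y) (Icc 0 a) t)
    (hf' : ContinuousOn (Function.uncurry f') (Icc 0 a ×ˢ K)) :
    TendstoUniformlyOn (fun δ y => δ⁻¹ • (f δ y - f 0 y)) (f' 0) (𝓝[>] 0) K := by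
  rw [Metric.tendstoUniformlyOn_iff]
  intro ε hε
  obtain ⟨η, hη, hunif⟩ := Metric.uniformContinuousOn_iff_le.1
    ((isCompact_Icc.prod hK).uniformContinuousOn_of_continuous hf') (ε / 2) (half_pos hε)
  filter_upwards [Ioo_mem_nhdsGT (lt_min ha hη)] with δ hδ y hy
  have hδ0 : 0 < δ := hδ.1
  have hδa : Icc 0 δ ⊆ Icc 0 a := Icc_subset_Icc_right (hδ.2.le.trans (min_le_left _ _))
  have hderiv : ∀ t ∈ Icc 0 δ, HasDerivWithinAt (fun t => f t y - t • f' 0 y)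
      (f' t y - f' 0 y) (Icc 0 δ) t := fun t ht =>
    ((hf y hy t (hδa ht)).mono hδa).sub
      (by simpa using (hasDerivWithinAt_id t _).smul_const (f' 0 y))
  have hbound : ∀ t ∈ Icc 0 δ, ‖f' t y - f' 0 y‖ ≤ ε / 2 := by
    intro t ht
    rw [← dist_eq_norm]
    refine hunif (t, y) ⟨hδa ht, hy⟩ (0, y) ⟨left_mem_Icc.2 ha.le, hy⟩ ?_
    simp only [Prod.dist_eq, dist_self, Real.dist_eq, sub_zero, abs_of_nonneg ht.1]
    exact max_le (ht.2.trans (hδ.2.le.trans (min_le_right _ _))) hη.le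
  have hmvt := (convex_Icc 0 δ).norm_image_sub_le_of_norm_hasDerivWithin_le hderiv hbound
    (left_mem_Icc.2 hδ0.le) (right_mem_Icc.2 hδ0.le)
  simp only [zero_smul, sub_zero, Real.norm_eq_abs, abs_of_pos hδ0] at hmvt
  have hslope : δ⁻¹ • (f δ y - f 0 y) - f' 0 y = δ⁻¹ • (f δ y - δ • f' 0 y - f 0 y) := by
    rw [smul_sub, smul_sub, smul_sub, smul_smul, inv_mul_cancel₀ hδ0.ne', one_smul]
    abel
  calc dist (f' 0 y) (δ⁻¹ • (f δ y - f 0 y))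
      = δ⁻¹ * ‖f δ y - δ • f' 0 y - f 0 y‖ := by
        rw [dist_comm, dist_eq_norm, hslope, norm_smul_of_nonneg (inv_nonneg.2 hδ0.le)]
    _ ≤ δ⁻¹ * (ε / 2 * δ) := by gcongr
    _ = ε / 2 := by field_simp
    _ < ε := half_lt_self hε

noncomputable def stripAngle (δ y : ℝ) : ℝ := π / 2 * (2 * y - δ) / (π + δ)

lemma stripRad_eq (δ y : ℝ) : stripRad δ y = 4 * ((π + δ) / π) * cos (stripAngle δ y) := rfl

lemma stripAngle_mem_Ioo {δ y : ℝ} (hδ : 0 ≤ δ) (hy : y ∈ Ioo (-(π / 2)) (π / 2)) :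
    stripAngle δ y ∈ Ioo (-(π / 2)) (π / 2) := by
  have hπ := pi_pos
  obtain ⟨hy₁, hy₂⟩ := hy
  unfold stripAngle
  constructor
  · rw [lt_div_iff₀ (by positivity)]; nlinarith
  · rw [div_lt_iff₀ (by positivity)]; nlinarith

lemma stripRad_pos {δ y : ℝ} (hδ : 0 ≤ δ) (hy : y ∈ Ioo (-(π / 2)) (π / 2)) :
    0 < stripRad δ y := by
  have := cos_pos_of_mem_Ioo (stripAngle_mem_Ioo hδ hy)
  rw [stripRad_eq]
  positivity

noncomputable def stripLogDeriv (δ y : ℝ) : ℝ :=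
  1 / (π + δ) + tan (stripAngle δ y) * (π * (π + 2 * y) / (2 * (π + δ) ^ 2))

lemma hasDerivAt_log_stripRad {δ y : ℝ} (hδ : 0 ≤ δ) (hy : y ∈ Ioo (-(π / 2)) (π / 2)) :
    HasDerivAt (fun δ => log (stripRad δ y)) (stripLogDeriv δ y) δ := by
  have hπ := pi_pos
  have hπδ : π + δ ≠ 0 := by positivity
  have hcos := (cos_pos_of_mem_Ioo (stripAngle_mem_Ioo hδ hy)).ne'
  have hangle : HasDerivAt (stripAngle · y) (-(π * (π + 2 * y) / (2 * (π + δ) ^ 2))) δ := by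
    refine ((((hasDerivAt_id' δ).const_sub (2 * y)).const_mul (π / 2)).div
      ((hasDerivAt_id' δ).const_add π) hπδ).congr_deriv ?_
    field_simp
    ring
  have hrad : HasDerivAt (fun x => 4 * ((π + x) / π) * cos (stripAngle x y)) _ δ :=
    ((((hasDerivAt_id' δ).const_add π).div_const π).const_mul 4).mul hangle.cos
  refine (hrad.log (stripRad_pos hδ hy).ne').congr_deriv ?_
  rw [stripLogDeriv, tan_eq_sin_div_cos]
  field_simp

lemma continuousOn_stripLogDeriv :
    ContinuousOn (Function.uncurry stripLogDeriv) (Ici 0 ×ˢ Ioo (-(π / 2)) (π / 2)) := by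
  have hπ := pi_pos
  have hπδ : ∀ p ∈ Ici (0 : ℝ) ×ˢ Ioo (-(π / 2)) (π / 2), π + p.1 ≠ 0 := fun p hp => by
    have : (0 : ℝ) ≤ p.1 := hp.1
    positivity
  have htan : ContinuousOn (fun p : ℝ × ℝ => tan (stripAngle p.1 p.2))
      (Ici 0 ×ˢ Ioo (-(π / 2)) (π / 2)) :=
    continuousOn_tan.comp (by unfold stripAngle; fun_prop (disch := exact hπδ))
      fun p hp => (cos_pos_of_mem_Ioo (stripAngle_mem_Ioo hp.1 hp.2)).ne'
  unfold Function.uncurry stripLogDeriv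
  exact (continuousOn_const.div (by fun_prop) hπδ).add
    (htan.mul ((by fun_prop : Continuous _).continuousOn.div (by fun_prop)
      fun p hp => by simpa using hπδ p hp))

lemma stripLogDeriv_zero (y : ℝ) : stripLogDeriv 0 y = stripLim y := by
  have hπ := pi_ne_zero
  have hangle : stripAngle 0 y = y := by unfold stripAngle; field_simp; ring
  rw [stripLogDeriv, stripLim, hangle]
  field_simp
  ring

lemma stripLim_pos {y : ℝ} (hy : y ∈ Ioo (-(π / 2)) (π / 2)) : 0 < stripLim y := by
  have hπ := pi_pos
  obtain ⟨hy₁, hy₂⟩ := hy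
  have hlim : stripLim y = (2 + (π + 2 * y) * tan y) / (2 * π) := by
    rw [stripLim]; field_simp
  suffices 0 < 2 + (π + 2 * y) * tan y by rw [hlim]; positivity
  rcases le_or_gt 0 y with hy₀ | hy₀
  · nlinarith [tan_nonneg_of_nonneg_of_le_pi_div_two hy₀ hy₂.le]
  · have hx : π / 2 + y < tan (π / 2 + y) := lt_tan (by linarith) (by linarith)
    have hcot : tan (-y) = (tan (π / 2 + y))⁻¹ := by
      rw [← tan_pi_div_two_sub]; ring_nf
    have : (π / 2 + y) * tan (-y) < 1 := by
      rw [hcot, ← div_eq_mul_inv, div_lt_one (by linarith)]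
      exact hx
    rw [tan_neg] at this
    nlinarith

lemma tendstoUniformlyOn_stripRad {K : Set ℝ} (hK : IsCompact K)
    (hKsub : K ⊆ Ioo (-(π / 2)) (π / 2)) :
    TendstoUniformlyOn (fun δ y => (1 / δ) * log (stripRad δ y / stripRad 0 y))
      stripLim (𝓝[>] 0) K := by
  have hslope := tendstoUniformlyOn_slope_of_continuousOn
    (f := fun δ y => log (stripRad δ y)) hK one_pos
    (fun y hy t ht => (hasDerivAt_log_stripRad ht.1 (hKsub hy)).hasDerivWithinAt)
    (continuousOn_stripLogDeriv.mono (prod_mono Icc_subset_Ici_self hKsub))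
  rw [funext stripLogDeriv_zero] at hslope
  refine hslope.congr (eventually_nhdsWithin_of_forall fun δ hδ y hy => ?_)
  dsimp only
  rw [smul_eq_mul, one_div, log_div (stripRad_pos (le_of_lt hδ) (hKsub hy)).ne'
    (stripRad_pos le_rfl (hKsub hy)).ne']

theorem stmt14 :
    (∀ y ∈ Set.Ioo (-(π/2)) (π/2),
      Tendsto (fun δ => (1 / δ) * Real.log (stripRad δ y / stripRad 0 y))
        (nhdsWithin 0 (Set.Ioi 0)) (nhds (stripLim y)) ∧ 0 < stripLim y) ∧
    (∀ K : Set ℝ, IsCompact K → K ⊆ Set.Ioo (-(π/2)) (π/2) →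
      TendstoUniformlyOn (fun δ y => (1 / δ) * Real.log (stripRad δ y / stripRad 0 y))
        stripLim (nhdsWithin 0 (Set.Ioi 0)) K) := by
  refine ⟨fun y hy => ⟨?_, stripLim_pos hy⟩,
    fun _ hK hKsub => tendstoUniformlyOn_stripRad hK hKsub⟩
  exact (tendstoUniformlyOn_stripRad isCompact_singleton (singleton_subset_iff.2 hy)).tendsto_at rfl
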